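/- If u : 𝔻 → 𝔻 is a harmonic mapping (of the plane disc into itself) with u(0) = 0, then |∂u(0)| + |∂̄u(0)| ≤ 4/π, where ∂u = (1/2)(uₓ − i u_y) and ∂̄u = (1/2)(uₓ + i u_y) are the Wirtinger derivatives of u viewed as a complex-valued function. -/

import Mathlib

open Metric Set

/-- `u` is harmonic on the unit disc: it is `C²` there and its Laplacian vanishes at
every point of the disc (for `ℂ`-valued `u` this means both `Re u` and `Im u` are harmonic). -/
def HarmonicOnDisc {E : Type*} [NormedAddCommGroup E] [NormedSpace ℝ E] (u : ℂ → E) : Prop :=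
  ContDiffOn ℝ 2 u (ball 0 1) ∧
  ∀ z ∈ ball (0 : ℂ) 1,
    fderiv ℝ (fun w => fderiv ℝ u w 1) z 1
      + fderiv ℝ (fun w => fderiv ℝ u w Complex.I) z Complex.I = 0

/-!
Harmonicity makes `∂u` holomorphic: its Cauchy–Riemann equation is the Laplace equation together
with the symmetry of the second derivative. Taking primitives `h` of `∂u` and `g` of `∂(conj u)`,
the function `h + conj g` has the same real derivative as `u`, so `u = h + conj g` on the disc
after adjusting constants. For `0 < r < 1` and unimodular `α, β`, Cauchy's formula gives
`∫₀^{2π} u(re^{iθ}) (α e^{-iθ} + β e^{iθ}) dθ = 2πr (α h'(0) + β conj g'(0))`, while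
`|α e^{-iθ} + β e^{iθ}| = 2 |cos (θ + c)|` has integral `8`. Choosing `α, β` that rotate
`h'(0) = ∂u(0)` and `conj g'(0) = ∂̄u(0)` onto the positive axis gives
`2πr (|∂u(0)| + |∂̄u(0)|) ≤ 8`, and `r → 1` finishes.
-/

open Complex ComplexConjugate

noncomputable def wirtinger (u : ℂ → ℂ) (z : ℂ) : ℂ :=
  (1 / 2) * (fderiv ℝ u z 1 - I * fderiv ℝ u z I)

noncomputable def wirtingerBar (u : ℂ → ℂ) (z : ℂ) : ℂ :=
  (1 / 2) * (fderiv ℝ u z 1 + I * fderiv ℝ u z I)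

theorem fderiv_apply_eq_wirtinger (u : ℂ → ℂ) (z v : ℂ) :
    fderiv ℝ u z v = wirtinger u z * v + wirtingerBar u z * conj v := by
  have hv : fderiv ℝ u z v = v.re • fderiv ℝ u z 1 + v.im • fderiv ℝ u z I := by
    conv_lhs => rw [← re_add_im v]
    rw [show (v.re : ℂ) + v.im * I = v.re • (1 : ℂ) + v.im • I by simp [real_smul], map_add,
      map_smul, map_smul]
  rw [hv, wirtinger, wirtingerBar]
  conv_rhs => rw [← re_add_im v]
  simp only [real_smul, map_add, map_mul, conj_ofReal, conj_I]
  linear_combination (v.im : ℂ) * fderiv ℝ u z I * I_sq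

theorem wirtinger_conj (u : ℂ → ℂ) (z : ℂ) :
    wirtinger (fun w => conj (u w)) z = conj (wirtingerBar u z) := by
  have h : fderiv ℝ (fun w => conj (u w)) z = (conjCLE : ℂ →L[ℝ] ℂ).comp (fderiv ℝ u z) :=
    conjCLE.comp_fderiv
  simp only [wirtinger, wirtingerBar, h, ContinuousLinearMap.comp_apply,
    ContinuousLinearEquiv.coe_coe, conjCLE_apply, map_mul, map_add, conj_I, map_div₀, map_one,
    map_ofNat]
  ring

theorem HarmonicOnDisc.comp_continuousLinearEquiv {E F : Type*} [NormedAddCommGroup E]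
    [NormedSpace ℝ E] [NormedAddCommGroup F] [NormedSpace ℝ F] {u : ℂ → E}
    (hu : HarmonicOnDisc u) (L : E ≃L[ℝ] F) : HarmonicOnDisc (L ∘ u) := by
  have hpartial (c : ℂ) : (fun w => fderiv ℝ (L ∘ u) w c) = L ∘ fun w => fderiv ℝ u w c := by
    ext w; simp [L.comp_fderiv]
  refine ⟨L.contDiff.comp_contDiffOn hu.1, fun z hz => ?_⟩
  rw [hpartial, hpartial, L.comp_fderiv, L.comp_fderiv]
  simp only [ContinuousLinearMap.comp_apply, ContinuousLinearEquiv.coe_coe, ← map_add, hu.2 z hz,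
    map_zero]

theorem HarmonicOnDisc.differentiableOn_wirtinger {u : ℂ → ℂ} (hu : HarmonicOnDisc u) :
    DifferentiableOn ℂ (wirtinger u) (ball 0 1) := by
  intro z hz
  have hu₂ : ContDiffAt ℝ 2 u z := hu.1.contDiffAt (isOpen_ball.mem_nhds hz)
  have hD : DifferentiableAt ℝ (fderiv ℝ u) z :=
    (hu₂.fderiv_right le_rfl).differentiableAt one_ne_zero
  set B := fderiv ℝ (fderiv ℝ u) z
  have hpartial (c : ℂ) : HasFDerivAt (fun w => fderiv ℝ u w c)
      ((ContinuousLinearMap.apply ℝ ℂ c).comp B) z :=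
    (ContinuousLinearMap.apply ℝ ℂ c).hasFDerivAt.comp z hD.hasFDerivAt
  have hsymm : B I 1 = B 1 I := hu₂.isSymmSndFDerivAt (by simp) I 1
  have hlap : B 1 1 + B I I = 0 := by
    simpa [(hpartial 1).fderiv, (hpartial I).fderiv] using hu.2 z hz
  have hw : HasFDerivAt (wirtinger u)
      ((1 / 2 : ℂ) • ((ContinuousLinearMap.apply ℝ ℂ 1).comp B
        - I • (ContinuousLinearMap.apply ℝ ℂ I).comp B)) z :=
    ((hpartial 1).sub ((hpartial I).const_mul I)).const_mul (1 / 2 : ℂ)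
  refine (differentiableAt_complex_iff_differentiableAt_real.2
    ⟨hw.differentiableAt, ?_⟩).differentiableWithinAt
  simp only [hw.fderiv, smul_apply, sub_apply,
    ContinuousLinearMap.comp_apply, ContinuousLinearMap.apply_apply, smul_eq_mul, hsymm]
  linear_combination (-(1 / 2 : ℂ) * I) * hlap + (1 / 2 : ℂ) * B 1 I * I_sq

theorem HarmonicOnDisc.exists_eqOn_add_conj {u : ℂ → ℂ} (hu : HarmonicOnDisc u) :
    ∃ h g : ℂ → ℂ, (∀ z ∈ ball (0 : ℂ) 1, HasDerivAt h (wirtinger u z) z) ∧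
      (∀ z ∈ ball (0 : ℂ) 1, HasDerivAt g (conj (wirtingerBar u z)) z) ∧
      EqOn u (fun z => h z + conj (g z)) (ball 0 1) := by
  have hv : HarmonicOnDisc fun w => conj (u w) := hu.comp_continuousLinearEquiv conjCLE
  obtain ⟨h, hh0, hh⟩ := hu.differentiableOn_wirtinger.isExactOn_ball.with_val_at 0 (u 0)
  obtain ⟨g, hg0, hg⟩ := hv.differentiableOn_wirtinger.isExactOn_ball.with_val_at 0 0
  simp only [wirtinger_conj] at hg
  have hhg (z : ℂ) (hz : z ∈ ball (0 : ℂ) 1) : HasFDerivAt (fun z => h z + conj (g z))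
      (fderiv ℝ u z) z := by
    refine (((hh z hz).hasFDerivAt.restrictScalars ℝ).add
      (conjCLE.hasFDerivAt.comp z ((hg z hz).hasFDerivAt.restrictScalars ℝ))).congr_fderiv ?_
    ext1 v
    simp [fderiv_apply_eq_wirtinger, mul_comm]
  refine ⟨h, g, hh, hg, isOpen_ball.eqOn_of_fderiv_eq (convex_ball 0 1).isPreconnected
    (hu.1.differentiableOn two_ne_zero)
    (fun z hz => (hhg z hz).differentiableAt.differentiableWithinAt)
    (fun z hz => (hhg z hz).fderiv.symm) (mem_ball_self one_pos) (by simp [hh0, hg0])⟩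

open Real intervalIntegral

noncomputable def trigDegOne (a b : ℂ) (θ : ℝ) : ℂ :=
  a * exp (-(θ * I)) + b * exp (θ * I)

theorem DiffContOnCl.integral_circleMap_mul_trigDegOne {f : ℂ → ℂ} {r : ℝ}
    (hf : DiffContOnCl ℂ f (ball 0 r)) (hr : 0 < r) (a b : ℂ) :
    ∫ θ in 0..2 * π, f (circleMap 0 r θ) * trigDegOne a b θ = 2 * π * r * a * deriv f 0 := by
  -- On `|z| = r` we have `e^{-iθ} = r / z` and `e^{iθ} = z / r`, so the integrand is
  -- `F z / z²` against `dz / (i z)`, where `F z = (a r + (b / r) z²) f z` and `F' 0 = a r f' 0`.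
  set F : ℂ → ℂ := fun z => (a * r + b / r * z ^ 2) • f z
  have hpoly : Differentiable ℂ fun z : ℂ => a * r + b / r * z ^ 2 := by fun_prop
  have hF : DiffContOnCl ℂ F (ball 0 r) := hpoly.diffContOnCl.smul hf
  have hF0 : deriv F 0 = a * r * deriv f 0 := by
    have hf0 : DifferentiableAt ℂ f 0 := hf.differentiableAt isOpen_ball (mem_ball_self hr)
    rw [deriv_fun_smul (by fun_prop) hf0]
    simp
  have hcauchy := hF.deriv_eq_smul_circleIntegral hr
  have hpt (θ : ℝ) :
      deriv (circleMap 0 r) θ • ((1 / (circleMap 0 r θ - 0) ^ 2) • F (circleMap 0 r θ))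
        = I * (f (circleMap 0 r θ) * trigDegOne a b θ) := by
    have hr' : (r : ℂ) ≠ 0 := ofReal_ne_zero.2 hr.ne'
    simp only [deriv_circleMap, circleMap_zero, sub_zero, smul_eq_mul, F, trigDegOne,
      Complex.exp_neg]
    have := exp_ne_zero (θ * I)
    field_simp
  rw [circleIntegral, integral_congr fun θ _ => hpt θ, integral_const_mul, hF0,
    smul_eq_mul] at hcauchy
  apply mul_left_cancel₀ I_ne_zero
  rw [hcauchy]
  ring

theorem continuous_trigDegOne (a b : ℂ) : Continuous (trigDegOne a b) := by
  unfold trigDegOne; fun_prop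

theorem conj_trigDegOne (a b : ℂ) (θ : ℝ) :
    conj (trigDegOne a b θ) = trigDegOne (conj b) (conj a) θ := by
  simp only [trigDegOne, map_add, map_mul, ← Complex.exp_conj, map_neg, conj_ofReal, conj_I]
  ring_nf

theorem DiffContOnCl.continuous_comp_circleMap {f : ℂ → ℂ} {r : ℝ}
    (hf : DiffContOnCl ℂ f (ball 0 r)) (hr : 0 < r) : Continuous fun θ => f (circleMap 0 r θ) :=
  hf.continuousOn.comp_continuous (continuous_circleMap 0 r) fun θ => by
    rw [closure_ball 0 hr.ne']
    exact circleMap_mem_closedBall 0 hr.le θ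

theorem integral_circleMap_add_conj_mul_trigDegOne {h g : ℂ → ℂ} {r : ℝ}
    (hh : DiffContOnCl ℂ h (ball 0 r)) (hg : DiffContOnCl ℂ g (ball 0 r)) (hr : 0 < r)
    (a b : ℂ) :
    ∫ θ in 0..2 * π, (h (circleMap 0 r θ) + conj (g (circleMap 0 r θ))) * trigDegOne a b θ
      = 2 * π * r * (a * deriv h 0 + b * conj (deriv g 0)) := by
  have hpt (θ : ℝ) : (h (circleMap 0 r θ) + conj (g (circleMap 0 r θ))) * trigDegOne a b θ
      = h (circleMap 0 r θ) * trigDegOne a b θ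
        + conj (g (circleMap 0 r θ) * trigDegOne (conj b) (conj a) θ) := by
    rw [map_mul, conj_trigDegOne, conj_conj, conj_conj, add_mul]
  have hconj : ∫ θ in 0..2 * π, conj (g (circleMap 0 r θ) * trigDegOne (conj b) (conj a) θ)
      = conj (∫ θ in 0..2 * π, g (circleMap 0 r θ) * trigDegOne (conj b) (conj a) θ) :=
    conjLIE.toLinearIsometry.intervalIntegral_comp_comm _
  rw [integral_congr fun θ _ => hpt θ, integral_add, hconj,
    hh.integral_circleMap_mul_trigDegOne hr, hg.integral_circleMap_mul_trigDegOne hr]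
  · simp only [map_mul, map_ofNat, conj_ofReal, conj_conj]
    ring
  · exact ((hh.continuous_comp_circleMap hr).mul (continuous_trigDegOne a b)).intervalIntegrable _ _
  · exact (continuous_conj.comp ((hg.continuous_comp_circleMap hr).mul
      (continuous_trigDegOne _ _))).intervalIntegrable _ _

theorem norm_one_add_exp_mul_I (ψ : ℝ) : ‖1 + exp (ψ * I)‖ = 2 * |Real.cos (ψ / 2)| := by
  have h : 1 + exp (ψ * I) = exp ((ψ / 2 : ℝ) * I) * (2 * Complex.cos (ψ / 2 : ℝ)) := by
    rw [two_cos, mul_add, ← Complex.exp_add, ← Complex.exp_add]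
    push_cast
    ring_nf
    simp [add_comm]
  rw [h, norm_mul, norm_exp_ofReal_mul_I, one_mul, ← ofReal_cos, norm_mul, Complex.norm_real,
    Real.norm_eq_abs]
  norm_num

theorem norm_trigDegOne {a b : ℂ} (ha : ‖a‖ = 1) (hb : ‖b‖ = 1) (θ : ℝ) :
    ‖trigDegOne a b θ‖ = 2 * |Real.cos (θ + arg (b * conj a) / 2)| := by
  set c := arg (b * conj a)
  have haa : a * conj a = 1 := by rw [mul_conj, normSq_eq_norm_sq, ha]; norm_num
  have hc : b * conj a = exp (c * I) := by
    simpa [hb, ha] using (norm_mul_exp_arg_mul_I (b * conj a)).symm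
  have he : exp (-(θ * I)) * exp (θ * I) = 1 := by rw [← Complex.exp_add]; simp
  have h : trigDegOne a b θ
      = a * exp ((-θ : ℝ) * I) * (1 + exp ((2 * (θ + c / 2) : ℝ) * I)) := by
    rw [trigDegOne, show ((2 * (θ + c / 2) : ℝ) : ℂ) * I = θ * I + θ * I + c * I by push_cast; ring,
      Complex.exp_add, Complex.exp_add, ← hc, ofReal_neg, neg_mul]
    linear_combination -(exp (-(θ * I)) * exp (θ * I) * b * exp (θ * I)) * haa
      - b * exp (θ * I) * he
  rw [h, norm_mul, norm_mul, ha, norm_exp_ofReal_mul_I, norm_one_add_exp_mul_I,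
    mul_div_cancel_left₀ _ two_ne_zero, one_mul, one_mul]

theorem integral_abs_cos_add (c : ℝ) : ∫ θ in 0..2 * π, |Real.cos (θ + c)| = 4 := by
  have hper : Function.Periodic (fun x => |Real.cos x|) π := fun x => by simp [Real.cos_add_pi]
  have hint (t₁ t₂ : ℝ) : IntervalIntegrable (fun x => |Real.cos x|) MeasureTheory.volume t₁ t₂ :=
    (continuous_cos.abs).intervalIntegrable _ _
  have hhalf : ∫ x in -(π / 2)..π / 2, |Real.cos x| = 2 := by
    have hcos : EqOn (fun x => |Real.cos x|) Real.cos (uIcc (-(π / 2)) (π / 2)) := fun x hx =>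
      abs_of_nonneg (cos_nonneg_of_mem_Icc (by rwa [uIcc_of_le (by linarith [pi_pos])] at hx))
    rw [integral_congr hcos, integral_cos]
    norm_num
  rw [integral_comp_add_right (fun x => |Real.cos x|), zero_add,
    show 2 * π + c = c + (2 : ℤ) • π by simp; ring, hper.intervalIntegral_add_zsmul_eq 2 c hint,
    hper.intervalIntegral_add_eq c (-(π / 2)), show -(π / 2) + π = π / 2 by ring, hhalf]
  norm_num

theorem integral_norm_trigDegOne {a b : ℂ} (ha : ‖a‖ = 1) (hb : ‖b‖ = 1) :
    ∫ θ in 0..2 * π, ‖trigDegOne a b θ‖ = 8 := by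
  simp_rw [norm_trigDegOne ha hb, integral_const_mul, integral_abs_cos_add]
  norm_num

open Filter Topology in
theorem le_of_forall_mem_Ioo_mul_le {x y : ℝ} (h : ∀ r ∈ Ioo (0 : ℝ) 1, r * x ≤ y) : x ≤ y := by
  have hlim : Tendsto (fun r : ℝ => r * x) (𝓝[<] 1) (𝓝 x) :=
    ((continuous_mul_const x).tendsto' 1 x (one_mul x)).mono_left nhdsWithin_le_nhds
  exact le_of_tendsto hlim (by filter_upwards [Ioo_mem_nhdsLT one_pos] with r hr using h r hr)

theorem norm_deriv_add_norm_deriv_le {h g : ℂ → ℂ} (hh : DifferentiableOn ℂ h (ball 0 1))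
    (hg : DifferentiableOn ℂ g (ball 0 1)) (hbound : ∀ z ∈ ball (0 : ℂ) 1, ‖h z + conj (g z)‖ ≤ 1) :
    ‖deriv h 0‖ + ‖deriv g 0‖ ≤ 4 / π := by
  obtain ⟨α, hα, hαh⟩ := exists_norm_eq_mul_self (deriv h 0)
  obtain ⟨β, hβ, hβg⟩ := exists_norm_eq_mul_self (conj (deriv g 0))
  rw [le_div_iff₀ pi_pos]
  refine le_of_forall_mem_Ioo_mul_le fun r ⟨hr0, hr1⟩ => ?_
  have hr : closedBall (0 : ℂ) r ⊆ ball 0 1 := closedBall_subset_ball hr1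
  have hcircle (θ : ℝ) : circleMap 0 r θ ∈ ball (0 : ℂ) 1 :=
    hr (circleMap_mem_closedBall 0 hr0.le θ)
  have hcoeff := integral_circleMap_add_conj_mul_trigDegOne (hh.diffContOnCl_ball hr)
    (hg.diffContOnCl_ball hr) hr0 α β
  rw [← hαh, ← hβg, norm_conj] at hcoeff
  have key : 2 * π * r * (‖deriv h 0‖ + ‖deriv g 0‖) ≤ 8 := calc
    _ = ‖∫ θ in 0..2 * π,
          (h (circleMap 0 r θ) + conj (g (circleMap 0 r θ))) * trigDegOne α β θ‖ := by
      rw [hcoeff]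
      norm_cast
      rw [Real.norm_of_nonneg (by positivity)]
    _ ≤ ∫ θ in 0..2 * π, ‖trigDegOne α β θ‖ := by
      refine norm_integral_le_of_norm_le (by positivity) (MeasureTheory.ae_of_all _ fun θ _ => ?_)
        ((continuous_trigDegOne α β).norm.intervalIntegrable _ _)
      rw [norm_mul]
      exact mul_le_of_le_one_left (norm_nonneg _) (hbound _ (hcircle θ))
    _ = 8 := integral_norm_trigDegOne hα hβ
  nlinarith

theorem stmt17_general (u : ℂ → ℂ) (hu : HarmonicOnDisc u)
    (hmaps : MapsTo u (ball 0 1) (ball 0 1)) :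
    ‖(1 / 2) * (fderiv ℝ u 0 1 - Complex.I * fderiv ℝ u 0 Complex.I)‖
      + ‖(1 / 2) * (fderiv ℝ u 0 1 + Complex.I * fderiv ℝ u 0 Complex.I)‖
      ≤ 4 / Real.pi := by
  show ‖wirtinger u 0‖ + ‖wirtingerBar u 0‖ ≤ 4 / π
  obtain ⟨h, g, hh, hg, hu_eq⟩ := hu.exists_eqOn_add_conj
  have h0 : (0 : ℂ) ∈ ball 0 1 := mem_ball_self one_pos
  have hbound := norm_deriv_add_norm_deriv_le
    (fun z hz => (hh z hz).differentiableAt.differentiableWithinAt)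
    (fun z hz => (hg z hz).differentiableAt.differentiableWithinAt)
    (fun z hz => by simpa [hu_eq hz] using (mem_ball_zero_iff.1 (hmaps hz)).le)
  rwa [(hh 0 h0).deriv, (hg 0 h0).deriv, norm_conj] at hbound

/-- If `u : 𝔻 → 𝔻` is a harmonic mapping with `u(0) = 0`, then
`|∂u(0)| + |∂̄u(0)| ≤ 4/π`, where `∂u = (1/2)(uₓ − i·u_y)` and `∂̄u = (1/2)(uₓ + i·u_y)`
are the Wirtinger derivatives of `u` viewed as a complex-valued function. -/
theorem stmt17 (u : ℂ → ℂ) (hu : HarmonicOnDisc u)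
    (hmaps : MapsTo u (ball 0 1) (ball 0 1)) (h0 : u 0 = 0) :
    ‖(1 / 2) * (fderiv ℝ u 0 1 - Complex.I * fderiv ℝ u 0 Complex.I)‖
      + ‖(1 / 2) * (fderiv ℝ u 0 1 + Complex.I * fderiv ℝ u 0 Complex.I)‖
      ≤ 4 / Real.pi :=
  stmt17_general u hu hmaps
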